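/- Let W be a nonzero minimal closed max cone in (ℝ≥0)ⁿ invariant under max-times multiplication by A ∈ (ℝ≥0)^{n×n}, with A^{⊗t} ⊗ v ≠ 0 for every nonzero v ∈ W and t ≥ 1. Then [v : A^{⊗t} ⊗ v] = [v : A ⊗ v]^t for every nonzero v ∈ W and every t ≥ 1. -/

import Mathlib

/-!
Put `λ = [v : A^{⊗t} ⊗ v]` and `r = λ^{1/t}`. Since `λ • A^{⊗t} ⊗ v ≤ v`, the vector
`w = ⨆_{s<t} r^s • A^{⊗s} ⊗ v` satisfies `v ≤ w` and `r • A ⊗ w ≤ w`. The vectors `x ∈ W` with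
`r • A ⊗ x ≤ x` form a closed invariant max cone containing `w ≠ 0`, so by minimality it is all
of `W`; in particular `r • A ⊗ v ≤ v`, i.e. `r ≤ [v : A ⊗ v]`. The converse inequality
`[v : A ⊗ v]^t ≤ λ` follows by iterating `[v : A ⊗ v] • A ⊗ v ≤ v`.
-/

open scoped NNReal

def MaxCone {n : ℕ} (W : Set (Fin n → ℝ≥0)) : Prop :=
  (0 : Fin n → ℝ≥0) ∈ W ∧
  (∀ x ∈ W, ∀ y ∈ W, x ⊔ y ∈ W) ∧
  (∀ r : ℝ≥0, ∀ x ∈ W, r • x ∈ W)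

def maxMul {n : ℕ} (A : Matrix (Fin n) (Fin n) ℝ≥0) (v : Fin n → ℝ≥0) : Fin n → ℝ≥0 :=
  fun i => Finset.univ.sup fun j => A i j * v j

def maxMatMul {n : ℕ} (A B : Matrix (Fin n) (Fin n) ℝ≥0) : Matrix (Fin n) (Fin n) ℝ≥0 :=
  fun i j => Finset.univ.sup fun k => A i k * B k j

def maxPow {n : ℕ} (A : Matrix (Fin n) (Fin n) ℝ≥0) : ℕ → Matrix (Fin n) (Fin n) ℝ≥0
  | 0 => 1
  | (t + 1) => maxMatMul A (maxPow A t)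

noncomputable def bracket {n : ℕ} (v w : Fin n → ℝ≥0) : ℝ≥0 :=
  sSup {l : ℝ≥0 | l • w ≤ v}

lemma NNReal.smul_sup_pi {ι : Type*} (r : ℝ≥0) (x y : ι → ℝ≥0) : r • (x ⊔ y) = r • x ⊔ r • y :=
  funext fun _ => mul_max_of_nonneg _ _ zero_le

section MaxMul

variable {n : ℕ} (A B : Matrix (Fin n) (Fin n) ℝ≥0)

lemma maxMul_zero : maxMul A 0 = 0 :=
  funext fun _ => by simp [maxMul]

lemma maxMul_mono : Monotone (maxMul A) := fun _ _ h _ =>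
  Finset.sup_mono_fun fun j _ => mul_le_mul_of_nonneg_left (h j) zero_le

lemma maxMul_smul (r : ℝ≥0) (x : Fin n → ℝ≥0) : maxMul A (r • x) = r • maxMul A x := by
  funext i
  simp only [maxMul, Pi.smul_apply, smul_eq_mul, NNReal.mul_finset_sup, mul_left_comm]

lemma maxMul_sup (x y : Fin n → ℝ≥0) : maxMul A (x ⊔ y) = maxMul A x ⊔ maxMul A y := by
  funext i
  simp only [maxMul, Pi.sup_apply, ← Finset.sup_sup]
  exact congrArg _ (funext fun j => mul_max_of_nonneg _ _ zero_le)

lemma maxMul_finset_sup {ι : Type*} (s : Finset ι) (g : ι → Fin n → ℝ≥0) :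
    maxMul A (s.sup g) = s.sup fun a => maxMul A (g a) :=
  Finset.apply_sup_eq_sup_comp _ (maxMul_sup A) (maxMul_zero A)

lemma continuous_maxMul : Continuous (maxMul A) :=
  continuous_pi fun _ => Continuous.finset_sup_apply fun j _ =>
    continuous_const.mul (continuous_apply j)

lemma maxMul_one (v : Fin n → ℝ≥0) : maxMul 1 v = v :=
  funext fun _ => by simp [maxMul, Matrix.one_apply, Finset.sup_ite, Finset.filter_eq]

lemma maxMul_maxMatMul (v : Fin n → ℝ≥0) :
    maxMul (maxMatMul A B) v = maxMul A (maxMul B v) := by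
  funext i
  simp only [maxMul, maxMatMul, NNReal.mul_finset_sup, NNReal.finset_sup_mul, mul_assoc]
  exact Finset.sup_comm _ _ _

lemma maxMul_maxPow (t : ℕ) : maxMul (maxPow A t) = (maxMul A)^[t] := by
  induction t with
  | zero => exact funext maxMul_one
  | succ t ih =>
    funext v
    rw [maxPow, maxMul_maxMatMul, ih, Function.iterate_succ_apply']

lemma iterate_maxMul_smul (s : ℕ) (r : ℝ≥0) (x : Fin n → ℝ≥0) :
    (maxMul A)^[s] (r • x) = r • (maxMul A)^[s] x :=
  (Function.Commute.iterate_left (fun x => maxMul_smul A r x) s) x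

lemma pow_smul_iterate_maxMul_le {r : ℝ≥0} {v : Fin n → ℝ≥0} (h : r • maxMul A v ≤ v) (s : ℕ) :
    r ^ s • (maxMul A)^[s] v ≤ v := by
  induction s with
  | zero => simp
  | succ s ih =>
    calc r ^ (s + 1) • (maxMul A)^[s + 1] v
        = r ^ s • (maxMul A)^[s] (r • maxMul A v) := by
          rw [iterate_maxMul_smul, smul_smul, ← pow_succ, Function.iterate_succ_apply]
      _ ≤ r ^ s • (maxMul A)^[s] v :=
          smul_le_smul_of_nonneg_left ((maxMul_mono A).iterate s h) zero_le
      _ ≤ v := ih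

end MaxMul

section Bracket

variable {n : ℕ}

lemma bddAbove_bracket {v w : Fin n → ℝ≥0} (hw : w ≠ 0) : BddAbove {l : ℝ≥0 | l • w ≤ v} := by
  obtain ⟨i, hi⟩ := Function.ne_iff.mp hw
  refine ⟨v i / w i, fun l hl => ?_⟩
  rw [le_div_iff₀ (pos_iff_ne_zero.mpr hi)]
  exact hl i

lemma le_bracket {v w : Fin n → ℝ≥0} (hw : w ≠ 0) {l : ℝ≥0} (h : l • w ≤ v) : l ≤ bracket v w :=
  le_csSup (bddAbove_bracket hw) h

lemma bracket_smul_le (v w : Fin n → ℝ≥0) : bracket v w • w ≤ v := by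
  intro j
  rcases eq_or_ne (w j) 0 with h0 | h0
  · simp [h0]
  · rw [Pi.smul_apply, smul_eq_mul, ← le_div_iff₀ (pos_iff_ne_zero.mpr h0)]
    refine csSup_le ⟨0, by simp⟩ fun l hl => ?_
    rw [le_div_iff₀ (pos_iff_ne_zero.mpr h0)]
    exact hl j

end Bracket

section MinimalCone

variable {n : ℕ} {A : Matrix (Fin n) (Fin n) ℝ≥0} {W : Set (Fin n → ℝ≥0)}

lemma MaxCone.inter {V : Set (Fin n → ℝ≥0)} (hW : MaxCone W) (hV : MaxCone V) :
    MaxCone (W ∩ V) :=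
  ⟨⟨hW.1, hV.1⟩, fun x hx y hy => ⟨hW.2.1 x hx.1 y hy.1, hV.2.1 x hx.2 y hy.2⟩,
    fun r x hx => ⟨hW.2.2 r x hx.1, hV.2.2 r x hx.2⟩⟩

variable (A) in
def subeigenCone (r : ℝ≥0) : Set (Fin n → ℝ≥0) := {x | r • maxMul A x ≤ x}

lemma mem_subeigenCone {r : ℝ≥0} {x : Fin n → ℝ≥0} :
    x ∈ subeigenCone A r ↔ r • maxMul A x ≤ x :=
  Iff.rfl

lemma maxCone_subeigenCone (r : ℝ≥0) : MaxCone (subeigenCone A r) := by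
  refine ⟨by simp [subeigenCone, maxMul_zero], fun x hx y hy => ?_, fun c x hx => ?_⟩
  · simp only [mem_subeigenCone, maxMul_sup, NNReal.smul_sup_pi]
    exact sup_le_sup hx hy
  · simp only [mem_subeigenCone, maxMul_smul, smul_comm r c]
    exact smul_le_smul_of_nonneg_left hx zero_le

lemma isClosed_subeigenCone (r : ℝ≥0) : IsClosed (subeigenCone A r) :=
  isClosed_le ((continuous_maxMul A).const_smul r) continuous_id

lemma maxMul_mem_subeigenCone {r : ℝ≥0} {x : Fin n → ℝ≥0} (hx : x ∈ subeigenCone A r) :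
    maxMul A x ∈ subeigenCone A r := by
  simpa only [mem_subeigenCone, maxMul_smul] using maxMul_mono A hx

lemma subset_subeigenCone_of_minimal (hW : MaxCone W) (hcl : IsClosed W)
    (hinv : ∀ v ∈ W, maxMul A v ∈ W)
    (hmin : ∀ W' : Set (Fin n → ℝ≥0), MaxCone W' → IsClosed W' →
      (∃ w ∈ W', w ≠ 0) → (∀ v ∈ W', maxMul A v ∈ W') → W' ⊆ W → W' = W)
    {r : ℝ≥0} {w : Fin n → ℝ≥0} (hwW : w ∈ W) (hw0 : w ≠ 0) (hw : w ∈ subeigenCone A r) :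
    W ⊆ subeigenCone A r := by
  have hWr : W ∩ subeigenCone A r = W :=
    hmin _ (hW.inter (maxCone_subeigenCone r)) (hcl.inter (isClosed_subeigenCone r))
      ⟨w, ⟨hwW, hw⟩, hw0⟩ (fun x hx => ⟨hinv x hx.1, maxMul_mem_subeigenCone hx.2⟩)
      Set.inter_subset_left
  exact hWr ▸ Set.inter_subset_right

lemma exists_ge_mem_subeigenCone (hW : MaxCone W) (hinv : ∀ v ∈ W, maxMul A v ∈ W)
    {v : Fin n → ℝ≥0} (hv : v ∈ W) {r : ℝ≥0} {t : ℕ} (ht : 0 < t)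
    (h : r ^ t • (maxMul A)^[t] v ≤ v) :
    ∃ w ∈ W, v ≤ w ∧ w ∈ subeigenCone A r := by
  set orbit := fun s => r ^ s • (maxMul A)^[s] v
  have hv_le : v ≤ (Finset.range t).sup orbit := by
    simpa [orbit] using Finset.le_sup (f := orbit) (Finset.mem_range.mpr ht)
  refine ⟨(Finset.range t).sup orbit, ?_, hv_le, ?_⟩
  · exact Finset.sup_induction hW.1 hW.2.1 fun s _ => hW.2.2 _ _ (Set.MapsTo.iterate hinv s hv)
  · rw [mem_subeigenCone, maxMul_finset_sup,
      Finset.apply_sup_eq_sup_comp _ (NNReal.smul_sup_pi r) (smul_zero r)]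
    refine Finset.sup_le fun s hs => ?_
    have hstep : r • maxMul A (orbit s) = orbit (s + 1) := by
      simp only [orbit, maxMul_smul, smul_smul, ← pow_succ', Function.iterate_succ_apply']
    rw [Function.comp_apply, hstep]
    rcases (Nat.succ_le_of_lt (Finset.mem_range.mp hs)).eq_or_lt with hst | hst
    · exact hst ▸ h.trans hv_le
    · exact Finset.le_sup (f := orbit) (Finset.mem_range.mpr hst)

end MinimalCone

theorem stmt10_general {n : ℕ} (A : Matrix (Fin n) (Fin n) ℝ≥0) (W : Set (Fin n → ℝ≥0))
    (hW : MaxCone W) (hcl : IsClosed W)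
    (hinv : ∀ v ∈ W, maxMul A v ∈ W)
    (hmin : ∀ W' : Set (Fin n → ℝ≥0), MaxCone W' → IsClosed W' →
      (∃ w ∈ W', w ≠ 0) → (∀ v ∈ W', maxMul A v ∈ W') → W' ⊆ W → W' = W)
    (hpow : ∀ v ∈ W, v ≠ 0 → ∀ t : ℕ, 1 ≤ t → maxMul (maxPow A t) v ≠ 0) :
    ∀ t : ℕ, 1 ≤ t → ∀ v ∈ W, v ≠ 0 →
      bracket v (maxMul (maxPow A t) v) = bracket v (maxMul A v) ^ t := by
  intro t ht v hv hv0
  have hAv : maxMul A v ≠ 0 := by simpa [maxMul_maxPow] using hpow v hv hv0 1 le_rfl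
  have hAtv := hpow v hv hv0 t ht
  rw [maxMul_maxPow] at hAtv ⊢
  apply le_antisymm
  · obtain ⟨r, hr⟩ : ∃ r : ℝ≥0, r ^ t = bracket v ((maxMul A)^[t] v) :=
      ⟨_, NNReal.rpow_inv_natCast_pow _ (by omega)⟩
    obtain ⟨w, hwW, hvw, hw⟩ :=
      exists_ge_mem_subeigenCone hW hinv hv ht (hr ▸ bracket_smul_le _ _)
    have hw0 : w ≠ 0 := fun h => hv0 (le_antisymm (h ▸ hvw) zero_le)
    have hrv := subset_subeigenCone_of_minimal hW hcl hinv hmin hwW hw0 hw hv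
    exact hr ▸ pow_le_pow_left₀ zero_le (le_bracket hAv hrv) t
  · exact le_bracket hAtv (pow_smul_iterate_maxMul_le A (bracket_smul_le _ _) t)

theorem stmt10 {n : ℕ} (A : Matrix (Fin n) (Fin n) ℝ≥0) (W : Set (Fin n → ℝ≥0))
    (hW : MaxCone W) (hcl : IsClosed W) (hnz : ∃ w ∈ W, w ≠ 0)
    (hinv : ∀ v ∈ W, maxMul A v ∈ W)
    (hmin : ∀ W' : Set (Fin n → ℝ≥0), MaxCone W' → IsClosed W' →
      (∃ w ∈ W', w ≠ 0) → (∀ v ∈ W', maxMul A v ∈ W') → W' ⊆ W → W' = W)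
    (hpow : ∀ v ∈ W, v ≠ 0 → ∀ t : ℕ, 1 ≤ t → maxMul (maxPow A t) v ≠ 0) :
    ∀ t : ℕ, 1 ≤ t → ∀ v ∈ W, v ≠ 0 →
      bracket v (maxMul (maxPow A t) v) = bracket v (maxMul A v) ^ t :=
  stmt10_general A W hW hcl hinv hmin hpow
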